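/- arXiv:2309.01583 — 2 statements merged into one kernel-verified Lean document; each statement's English description precedes it below -/
import Mathlib

section
/- Let r ≥ 3 and let G be a proper spanning subgraph of the Turán graph T(2r,r) on 2r vertices (so G has the same vertex set as T(2r,r), the r parts of size 2 are independent sets of G, and G omits at least one edge of T(2r,r)). Then χ_gb(G) ≤ 2r − 2. -/
open Function

namespace GameCol

variable {V : Type*} [Fintype V] [DecidableEq V]

/-- A finite set of vertices is independent in `G`. -/
def IsIndepF (G : SimpleGraph V) (s : Finset V) : Prop :=
  ∀ u ∈ s, ∀ v ∈ s, ¬ G.Adj u v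

/-! ### The vertex colouring game.

A position is a partial proper colouring `f : V → Option ℕ` (`none` = uncoloured);
the palette consists of the `k` colours `0, …, k-1`.  The `Bool` records whose turn
it is (`true` = Maker).  Players alternate, Maker moving first, always making a legal
move if one exists; the game ends when the player to move has no legal move, and
Maker wins if and only if the whole graph is then coloured. -/

/-- Colour `c` may legally be played at `v`. -/
def ColLegal (G : SimpleGraph V) (k : ℕ) (f : V → Option ℕ) (v : V) (c : ℕ) : Prop :=
  c < k ∧ f v = none ∧ ∀ u, G.Adj v u → f u ≠ some c

/-- Every vertex is coloured. -/
def FullC (f : V → Option ℕ) : Prop := ∀ v, f v ≠ none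

/-- Maker wins the vertex colouring game from the given position with optimal play
(`fuel` is an upper bound on the number of remaining moves). -/
def MakerWinsC (G : SimpleGraph V) (k : ℕ) : ℕ → (V → Option ℕ) → Bool → Prop
  | 0, f, _ => FullC f
  | fuel + 1, f, true => FullC f ∨
      ∃ v c, ColLegal G k f v c ∧ MakerWinsC G k fuel (update f v (some c)) false
  | fuel + 1, f, false => FullC f ∨
      ((∃ v c, ColLegal G k f v c) ∧
        ∀ v c, ColLegal G k f v c → MakerWinsC G k fuel (update f v (some c)) true)

/-- The game chromatic number `χ_g(G)`: the least number of colours for which Maker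
has a winning strategy in the vertex colouring game. -/
noncomputable def gameChromaticNumber (G : SimpleGraph V) : ℕ :=
  sInf {k | MakerWinsC G k (Fintype.card V) (fun _ => none) true}

/-! ### The vertex colouring game with blanks.

Positions are `f : V → Option (Option ℕ)`: `none` = unplayed, `some none` = blank,
`some (some c)` = coloured with colour `c`.  The palette is a finite set `K ⊆ ℕ` of
colours.  On her turn Maker must play a colour; on his turn Breaker may play a colour,
or a blank at any unplayed vertex.  The game ends as soon as no vertex can legally
receive a colour, and Maker wins iff every vertex is then coloured or blank. -/

/-- Colour `c` may legally be played at `v` (blanks put no restriction on their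
neighbours). -/
def BColLegal (G : SimpleGraph V) (K : Finset ℕ) (f : V → Option (Option ℕ))
    (v : V) (c : ℕ) : Prop :=
  c ∈ K ∧ f v = none ∧ ∀ u, G.Adj v u → f u ≠ some (some c)

/-- Every vertex is coloured or blank. -/
def AllPlayed (f : V → Option (Option ℕ)) : Prop := ∀ v, f v ≠ none

/-- Maker wins the vertex colouring game with blanks from the given position. -/
def MakerWinsB (G : SimpleGraph V) (K : Finset ℕ) :
    ℕ → (V → Option (Option ℕ)) → Bool → Prop
  | 0, f, _ => AllPlayed f
  | fuel + 1, f, true => AllPlayed f ∨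
      ∃ v c, BColLegal G K f v c ∧ MakerWinsB G K fuel (update f v (some (some c))) false
  | fuel + 1, f, false =>
      ((¬ ∃ v c, BColLegal G K f v c) ∧ AllPlayed f) ∨
      ((∃ v c, BColLegal G K f v c) ∧
        (∀ v c, BColLegal G K f v c →
          MakerWinsB G K fuel (update f v (some (some c))) true) ∧
        (∀ v, f v = none → MakerWinsB G K fuel (update f v (some none)) true))

/-- The game chromatic number with blanks `χ_gb(G)`: the least number of colours for
which Maker has a winning strategy in the vertex colouring game with blanks. -/
noncomputable def chiGb (G : SimpleGraph V) : ℕ :=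
  sInf {k | MakerWinsB G (Finset.range k) (Fintype.card V) (fun _ => none) true}

/-! ### The game with blanks, with classes marked for blanks.

The extra datum is the finite set `ds` of currently marked classes.  Maker may also
play blanks at unplayed vertices of marked classes; the game does not end while some
vertex of a marked class is unplayed; and whenever Breaker plays a blank at `v` he may
additionally remove one marked class not containing `v`. -/

/-- `v` belongs to some class marked for blanks. -/
def InMarked (ds : Finset (Finset V)) (v : V) : Prop := ∃ d ∈ ds, v ∈ d

/-- The game has ended: no colour move is available and no vertex of a class marked
for blanks is left unplayed. -/
def MEnded (G : SimpleGraph V) (K : Finset ℕ) (f : V → Option (Option ℕ))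
    (ds : Finset (Finset V)) : Prop :=
  (¬ ∃ v c, BColLegal G K f v c) ∧ ∀ v, InMarked ds v → f v ≠ none

/-- Maker wins the vertex colouring game with blanks, with the classes `ds` marked
for blanks, from the given position. -/
def MakerWinsM (G : SimpleGraph V) (K : Finset ℕ) :
    ℕ → (V → Option (Option ℕ)) → Finset (Finset V) → Bool → Prop
  | 0, f, _, _ => AllPlayed f
  | fuel + 1, f, ds, true =>
      (MEnded G K f ds ∧ AllPlayed f) ∨
      (¬ MEnded G K f ds ∧
        ((∃ v c, BColLegal G K f v c ∧
            MakerWinsM G K fuel (update f v (some (some c))) ds false) ∨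
         (∃ v, f v = none ∧ InMarked ds v ∧
            MakerWinsM G K fuel (update f v (some none)) ds false)))
  | fuel + 1, f, ds, false =>
      (MEnded G K f ds ∧ AllPlayed f) ∨
      (¬ MEnded G K f ds ∧
        (∀ v c, BColLegal G K f v c →
          MakerWinsM G K fuel (update f v (some (some c))) ds true) ∧
        (∀ v, f v = none →
          MakerWinsM G K fuel (update f v (some none)) ds true ∧
          ∀ d ∈ ds, v ∉ d →
            MakerWinsM G K fuel (update f v (some none)) (ds.erase d) true))

/-- `χ_gb(G; D₁,…,Dₛ)`: the least number of colours for which Maker has a winning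
strategy in the vertex colouring game with blanks with the classes in `ds` marked for
blanks. -/
noncomputable def chiGbM (G : SimpleGraph V) (ds : Finset (Finset V)) : ℕ :=
  sInf {k | MakerWinsM G (Finset.range k) (Fintype.card V) (fun _ => none) ds true}

/-! ### Move sequences, for conditioning the game on an initial sequence of plays. -/

/-- A move in the game with blanks: a colour at a vertex, or a blank at a vertex
together with an optional marked class which Breaker removes. -/
inductive BMove (W : Type*) where
  | color (v : W) (c : ℕ)
  | blank (v : W) (removed : Option (Finset W))
  deriving DecidableEq

/-- The vertex at which a move is made. -/
def BMove.vertex {W : Type*} : BMove W → W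
  | .color v _ => v
  | .blank v _ => v

/-- The effect of a single move on a position. -/
def bStep (st : (V → Option (Option ℕ)) × Finset (Finset V)) :
    BMove V → (V → Option (Option ℕ)) × Finset (Finset V)
  | .color v c => (update st.1 v (some (some c)), st.2)
  | .blank v none => (update st.1 v (some none), st.2)
  | .blank v (some d) => (update st.1 v (some none), st.2.erase d)

/-- The position reached after the sequence `P` of moves. -/
def bRun (st : (V → Option (Option ℕ)) × Finset (Finset V)) (P : List (BMove V)) :
    (V → Option (Option ℕ)) × Finset (Finset V) :=
  P.foldl bStep st

/-- `P` is a legal sequence of moves from the given position in the game with blanks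
with marked classes (the `Bool` is the player to move, `true` = Maker). -/
def LegalSeqM (G : SimpleGraph V) (K : Finset ℕ) :
    (V → Option (Option ℕ)) → Finset (Finset V) → Bool → List (BMove V) → Prop
  | _, _, _, [] => True
  | f, ds, true, BMove.color v c :: rest =>
      ¬ MEnded G K f ds ∧ BColLegal G K f v c ∧
        LegalSeqM G K (update f v (some (some c))) ds false rest
  | f, ds, true, BMove.blank v r :: rest =>
      ¬ MEnded G K f ds ∧ f v = none ∧ InMarked ds v ∧ r = none ∧
        LegalSeqM G K (update f v (some none)) ds false rest
  | f, ds, false, BMove.color v c :: rest =>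
      ¬ MEnded G K f ds ∧ BColLegal G K f v c ∧
        LegalSeqM G K (update f v (some (some c))) ds true rest
  | f, ds, false, BMove.blank v none :: rest =>
      ¬ MEnded G K f ds ∧ f v = none ∧
        LegalSeqM G K (update f v (some none)) ds true rest
  | f, ds, false, BMove.blank v (some d) :: rest =>
      ¬ MEnded G K f ds ∧ f v = none ∧ d ∈ ds ∧ v ∉ d ∧
        LegalSeqM G K (update f v (some none)) (ds.erase d) true rest

/-- `χ_gb(G; ds | P)`: the least number of colours for which Maker has a winning
strategy in the vertex colouring game with blanks with the classes `ds` marked for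
blanks, conditioned on the game starting with the sequence `P` of moves. -/
noncomputable def chiGbMCond (G : SimpleGraph V) (ds : Finset (Finset V))
    (P : List (BMove V)) : ℕ :=
  sInf {n | ∃ K : Finset ℕ, K.card = n ∧
    LegalSeqM G K (fun _ => none) ds true P ∧
    MakerWinsM G K (Fintype.card V - P.length) (bRun (fun _ => none, ds) P).1
      (bRun (fun _ => none, ds) P).2 (decide (P.length % 2 = 0))}

/-! ### The marking game. -/

/-- `v` may legally be marked: it is unmarked and has at most `k - 1` marked
neighbours. -/
def MarkLegal (G : SimpleGraph V) (k : ℕ) (M : Set V) (v : V) : Prop :=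
  v ∉ M ∧ (M ∩ {u | G.Adj v u}).ncard < k

/-- Maker wins the marking game from the given position. -/
def MakerWinsMark (G : SimpleGraph V) (k : ℕ) : ℕ → Set V → Bool → Prop
  | 0, M, _ => ∀ v, v ∈ M
  | fuel + 1, M, true => (∀ v, v ∈ M) ∨
      ∃ v, MarkLegal G k M v ∧ MakerWinsMark G k fuel (insert v M) false
  | fuel + 1, M, false => (∀ v, v ∈ M) ∨
      ((∃ v, MarkLegal G k M v) ∧
        ∀ v, MarkLegal G k M v → MakerWinsMark G k fuel (insert v M) true)

/-- The marking number (game colouring number) `m(G)`: the least `k` for which Maker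
has a winning strategy in the marking game. -/
noncomputable def markingNumber (G : SimpleGraph V) : ℕ :=
  sInf {k | MakerWinsMark G k (Fintype.card V) ∅ true}

end GameCol

/-!
Let `p v` be the other vertex of the part of `v`. The neighbours of an unplayed vertex `w` lie
among the `2r - 2` vertices outside its part, so `w` can still be coloured unless these show
`2r - 2` distinct colours; it is enough that one of them is uncoloured, or that two of them share
a colour. Once two vertices showing at most one colour have been played together with their
partners, this holds for every vertex that is still unplayed, whatever happens later.

Maker forces such a pair within a few moves. Let `a`, `b` lie in different parts and be
non-adjacent in `G`. Maker colours `b` with `c₀`, and Breaker plays at some `v`: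
* `v = p b`, blank or `c₀`: the part of `b` is such a pair;
* `v = p b`, colour `c ≠ c₀`: Maker colours `a` with `c₀`;
* `v ≠ p b`, colour `c₀`: two vertices now have colour `c₀`;
* `v ≠ p b`, blank or colour `c ≠ c₀`: Maker colours `p v` with any legal colour, resp. with
  `c`, which is legal there since `b` is the only other coloured vertex.
In the middle two cases Maker then colours the partners of the two vertices of colour `c₀` as
soon as she can; since `2r ≥ 6`, another vertex is still unplayed each time, so she can.
-/

namespace GameCol

open Finset

variable {V : Type*}

section Colors

def colorsOn (f : V → Option (Option ℕ)) (s : Finset V) : Finset ℕ :=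
  s.biUnion fun u => (f u).join.toFinset

theorem mem_colorsOn {f : V → Option (Option ℕ)} {s : Finset V} {c : ℕ} :
    c ∈ colorsOn f s ↔ ∃ u ∈ s, f u = some (some c) := by
  simp [colorsOn, Option.join_eq_some_iff]

theorem card_colorsOn_le (f : V → Option (Option ℕ)) (s : Finset V) :
    #(colorsOn f s) ≤ #s :=
  (card_biUnion_le_card_mul _ _ 1 fun u _ => by cases (f u).join <;> simp).trans_eq (mul_one _)

theorem card_colorsOn_lt [DecidableEq V] {f : V → Option (Option ℕ)} {s : Finset V} {x : V}
    (hx : x ∈ s) (hrep : ∀ c, f x = some (some c) → ∃ y ∈ s, y ≠ x ∧ f y = f x) :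
    #(colorsOn f s) < #s :=
  calc #(colorsOn f s) ≤ #(colorsOn f (s.erase x)) := by
        refine card_le_card fun c hc => ?_
        obtain ⟨u, hu, hfu⟩ := mem_colorsOn.1 hc
        rw [mem_colorsOn]
        by_cases hux : u = x
        · subst hux
          obtain ⟨y, hy, hyu, hfy⟩ := hrep c hfu
          exact ⟨y, mem_erase.2 ⟨hyu, hy⟩, hfy.trans hfu⟩
        · exact ⟨u, mem_erase.2 ⟨hux, hu⟩, hfu⟩
    _ ≤ #(s.erase x) := card_colorsOn_le f _
    _ < #s := card_erase_lt_of_mem hx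

theorem exists_bColLegal_of_card_colorsOn_lt {G : SimpleGraph V} {K : Finset ℕ}
    {f : V → Option (Option ℕ)} {w : V} {s : Finset V} (hw : f w = none)
    (hs : ∀ u, G.Adj w u → u ∈ s) (h : #(colorsOn f s) < #K) : ∃ c, BColLegal G K f w c := by
  obtain ⟨c, hcK, hcs⟩ := exists_mem_notMem_of_card_lt_card h
  exact ⟨c, hcK, hw, fun u hadj hu => hcs (mem_colorsOn.2 ⟨u, hs u hadj, hu⟩)⟩

theorem update_eq_of_ne_none [DecidableEq V] {f : V → Option (Option ℕ)} {u v : V}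
    (hv : f v = none) (hu : f u ≠ none) (o : Option (Option ℕ)) : update f v o u = f u := by
  rw [update_of_ne]
  rintro rfl
  exact hu hv

end Colors

section Game

variable [Fintype V] {f : V → Option (Option ℕ)} {v : V}

def unplayed (f : V → Option (Option ℕ)) : Finset V := univ.filter fun v => f v = none

theorem mem_unplayed : v ∈ unplayed f ↔ f v = none := by simp [unplayed]

variable [DecidableEq V] {G : SimpleGraph V} {K : Finset ℕ}

theorem card_unplayed_update (hv : f v = none) (o : Option ℕ) :
    #(unplayed (update f v (some o))) + 1 = #(unplayed f) := by
  have : unplayed (update f v (some o)) = (unplayed f).erase v := by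
    ext u
    by_cases huv : u = v
    · subst huv; simp [mem_unplayed]
    · simp [mem_unplayed, huv]
  rw [this, card_erase_add_one (mem_unplayed.2 hv)]

/-- Every move plays a vertex, so `#(unplayed f)` is all the fuel the game from `f` can use. -/
def MakerWinsAt (G : SimpleGraph V) (K : Finset ℕ) (f : V → Option (Option ℕ)) (t : Bool) :
    Prop :=
  MakerWinsB G K #(unplayed f) f t

theorem makerWinsAt_true_of_move {c : ℕ} (hc : BColLegal G K f v c)
    (h : MakerWinsAt G K (update f v (some (some c))) false) : MakerWinsAt G K f true := by
  rw [MakerWinsAt, ← card_unplayed_update hc.2.1]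
  exact Or.inr ⟨v, c, hc, h⟩

theorem makerWinsAt_false_of_moves (hex : ∃ v c, BColLegal G K f v c)
    (hreply : ∀ v o, f v = none → (∀ c, o = some c → BColLegal G K f v c) →
      MakerWinsAt G K (update f v (some o)) true) :
    MakerWinsAt G K f false := by
  obtain ⟨v, c, hc⟩ := hex
  have hcard : ∀ u o, f u = none →
      #(unplayed (update f u (some o))) = #(unplayed (update f v (some (some c)))) := by
    intro u o hu
    have := card_unplayed_update hu o
    have := card_unplayed_update hc.2.1 (some c)
    omega
  rw [MakerWinsAt, ← card_unplayed_update hc.2.1]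
  refine Or.inr ⟨⟨v, c, hc⟩, fun u d hd => ?_, fun u hu => ?_⟩
  · have := hreply u (some d) hd.2.1 (fun _ h => Option.some_inj.1 h ▸ hd)
    rwa [MakerWinsAt, hcard u _ hd.2.1] at this
  · have := hreply u none hu (fun _ h => by cases h)
    rwa [MakerWinsAt, hcard u _ hu] at this

theorem makerWinsAt_of_invariant (Inv : (V → Option (Option ℕ)) → Prop)
    (hlegal : ∀ f w, Inv f → f w = none → ∃ c, BColLegal G K f w c)
    (hstep : ∀ f v o, Inv f → f v = none → Inv (update f v (some o)))
    (hf : Inv f) (t : Bool) : MakerWinsAt G K f t := by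
  induction hn : #(unplayed f) generalizing f t with
  | zero =>
    rw [MakerWinsAt, hn]
    intro v hv
    simpa [hn] using card_pos.2 ⟨v, mem_unplayed.2 hv⟩
  | succ n ih =>
    obtain ⟨w, hw⟩ := card_pos.1 (by omega : 0 < #(unplayed f))
    obtain ⟨c, hc⟩ := hlegal f w hf (mem_unplayed.1 hw)
    have hcard : ∀ v o, f v = none → #(unplayed (update f v (some o))) = n := by
      intro v o hv
      have := card_unplayed_update hv o
      omega
    cases t with
    | false =>
      exact makerWinsAt_false_of_moves ⟨w, c, hc⟩ fun v o hv _ =>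
        ih (hstep f v o hf hv) true (hcard v o hv)
    | true =>
      exact makerWinsAt_true_of_move hc (ih (hstep f w _ hf hc.2.1) false (hcard w _ hc.2.1))

end Game

section Pairing

/-- `G` is a spanning subgraph of the complete multipartite graph with parts `{v, p v}`. -/
structure IsIndepPairing (G : SimpleGraph V) (p : V → V) : Prop where
  involutive : Involutive p
  ne_self : ∀ v, p v ≠ v
  not_adj : ∀ v, ¬ G.Adj v (p v)

/-- Such a pair lies outside the part of every unplayed vertex and shows it at most one colour. -/
def HasWastedPair (p : V → V) (f : V → Option (Option ℕ)) : Prop :=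
  ∃ x y, x ≠ y ∧ (f x = some none ∨ f x = f y) ∧ f y ≠ none ∧ f (p x) ≠ none ∧ f (p y) ≠ none

theorem HasWastedPair.update [DecidableEq V] {p : V → V} {f : V → Option (Option ℕ)} {v : V}
    (h : HasWastedPair p f) (hv : f v = none) (o : Option ℕ) :
    HasWastedPair p (update f v (some o)) := by
  obtain ⟨x, y, hxy, hxy', hy, hpx, hpy⟩ := h
  have hx : f x ≠ none := by rcases hxy' with h | h <;> simp [h, hy]
  have keep := fun u (hu : f u ≠ none) => update_eq_of_ne_none hv hu (some o)
  exact ⟨x, y, hxy, by rwa [keep x hx, keep y hy], by rwa [keep y hy],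
    by rwa [keep _ hpx], by rwa [keep _ hpy]⟩

variable [Fintype V] [DecidableEq V] {G : SimpleGraph V} {p : V → V} {K : Finset ℕ}
  {f : V → Option (Option ℕ)} {v w x y : V}

theorem exists_bColLegal_of_repeated (hG : IsIndepPairing G p)
    (hK : Fintype.card V ≤ #K + 2) (hw : f w = none) (hx : x ∉ ({w, p w} : Finset V))
    (hrep : ∀ c, f x = some (some c) → ∃ y ∉ ({w, p w} : Finset V), y ≠ x ∧ f y = f x) :
    ∃ c, BColLegal G K f w c := by
  refine exists_bColLegal_of_card_colorsOn_lt (s := {w, p w}ᶜ) hw (fun u hu => ?_) ?_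
  · simp only [mem_compl, mem_insert, mem_singleton, not_or]
    exact ⟨(G.ne_of_adj hu).symm, fun h => hG.not_adj w (h ▸ hu)⟩
  · have hlt := card_colorsOn_lt (mem_compl.2 hx) (by simpa only [mem_compl] using hrep)
    have hcompl := card_compl ({w, p w} : Finset V)
    have hpair := card_pair (hG.ne_self w).symm
    have := card_le_univ ({w, p w} : Finset V)
    omega

theorem exists_bColLegal_of_partner_played (hG : IsIndepPairing G p)
    (hK : Fintype.card V ≤ #K + 2) (hw : f w = none) (hpw : f (p w) ≠ none)
    (h2 : 2 ≤ #(unplayed f)) : ∃ c, BColLegal G K f w c := by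
  obtain ⟨x, hx, hxw⟩ := exists_mem_ne h2 w
  have hx := mem_unplayed.1 hx
  refine exists_bColLegal_of_repeated (x := x) hG hK hw ?_ fun c h => by simp [hx] at h
  simp only [mem_insert, mem_singleton, not_or]
  exact ⟨hxw, fun h => hpw (h ▸ hx)⟩

theorem HasWastedPair.exists_bColLegal (hG : IsIndepPairing G p)
    (hK : Fintype.card V ≤ #K + 2) (h : HasWastedPair p f) (hw : f w = none) :
    ∃ c, BColLegal G K f w c := by
  obtain ⟨x, y, hxy, hxy', hy, hpx, hpy⟩ := h
  have hx : f x ≠ none := by rcases hxy' with h | h <;> simp [h, hy]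
  have off : ∀ u, f u ≠ none → f (p u) ≠ none → u ∉ ({w, p w} : Finset V) := by
    intro u hu hpu
    simp only [mem_insert, mem_singleton, not_or]
    exact ⟨fun h => hu (h ▸ hw), fun h => hpu (by rw [h, hG.involutive w]; exact hw)⟩
  refine exists_bColLegal_of_repeated hG hK hw (off x hx hpx)
    fun c hc => ⟨y, off y hy hpy, hxy.symm, ?_⟩
  rcases hxy' with h | h
  · simp [h] at hc
  · exact h.symm

theorem makerWinsAt_of_hasWastedPair (hG : IsIndepPairing G p)
    (hK : Fintype.card V ≤ #K + 2) (h : HasWastedPair p f) (t : Bool) : MakerWinsAt G K f t :=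
  makerWinsAt_of_invariant (HasWastedPair p) (fun _ _ h hw => h.exists_bColLegal hG hK hw)
    (fun _ _ o h hv => h.update hv o) h t

theorem makerWinsAt_true_of_completable_part (hG : IsIndepPairing G p)
    (hK : Fintype.card V ≤ #K + 2) {o : Option ℕ} (hv : f v = some o) (hpv : f (p v) = none)
    (ho : ∀ c, o = some c → BColLegal G K f (p v) c) (h2 : 2 ≤ #(unplayed f)) :
    MakerWinsAt G K f true := by
  obtain ⟨d, hd, hod⟩ : ∃ d, BColLegal G K f (p v) d ∧ (o = none ∨ o = some d) := by
    cases o with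
    | none =>
      obtain ⟨d, hd⟩ := exists_bColLegal_of_partner_played hG hK hpv
        (by rw [hG.involutive v, hv]; simp) h2
      exact ⟨d, hd, Or.inl rfl⟩
    | some c => exact ⟨c, ho c rfl, Or.inr rfl⟩
  refine makerWinsAt_true_of_move hd (makerWinsAt_of_hasWastedPair hG hK ?_ false)
  have hfv : update f (p v) (some (some d)) v = some o :=
    (update_of_ne (hG.ne_self v).symm _ _).trans hv
  refine ⟨v, p v, (hG.ne_self v).symm, ?_, by simp, by simp, ?_⟩
  · rcases hod with rfl | rfl
    · exact Or.inl hfv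
    · exact Or.inr (by simp [hfv])
  · rw [hG.involutive v, hfv]; simp

theorem makerWinsAt_true_of_monochromatic_pair_of_partner_played (hG : IsIndepPairing G p)
    (hK : Fintype.card V ≤ #K + 2) {c : ℕ} (hxy : x ≠ y) (hx : f x = some (some c))
    (hyx : f y = f x) (hpx : f (p x) ≠ none) (h2 : 2 ≤ #(unplayed f)) :
    MakerWinsAt G K f true := by
  have hy : f y ≠ none := by simp [hyx, hx]
  by_cases hpy : f (p y) = none
  · obtain ⟨d, hd⟩ := exists_bColLegal_of_partner_played hG hK hpy
      (by rwa [hG.involutive y]) h2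
    refine makerWinsAt_true_of_move hd (makerWinsAt_of_hasWastedPair hG hK ?_ false)
    have keep := fun u (hu : f u ≠ none) => update_eq_of_ne_none hpy hu (some (some d))
    exact ⟨x, y, hxy, Or.inr (by rw [keep x (by simp [hx]), keep y hy, hyx]),
      by rwa [keep y hy], by rwa [keep _ hpx], by simp⟩
  · exact makerWinsAt_of_hasWastedPair hG hK ⟨x, y, hxy, Or.inr hyx.symm, hy, hpx, hpy⟩ true

theorem makerWinsAt_false_of_monochromatic_pair_of_partner_played (hG : IsIndepPairing G p)
    (hK : Fintype.card V ≤ #K + 2) {c : ℕ} (hxy : x ≠ y) (hx : f x = some (some c))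
    (hyx : f y = f x) (hpx : f (p x) ≠ none) (h3 : 3 ≤ #(unplayed f)) :
    MakerWinsAt G K f false := by
  have hx' : f x ≠ none := by simp [hx]
  have hy : f y ≠ none := by simp [hyx, hx]
  by_cases hpy : f (p y) = none
  · obtain ⟨d, hd⟩ := exists_bColLegal_of_partner_played hG hK hpy
      (by rwa [hG.involutive y]) (by omega)
    refine makerWinsAt_false_of_moves ⟨p y, d, hd⟩ fun v o hv _ => ?_
    have keep := fun u (hu : f u ≠ none) => update_eq_of_ne_none hv hu (some o)
    exact makerWinsAt_true_of_monochromatic_pair_of_partner_played hG hK hxy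
      (by rw [keep x hx', hx]) (by rw [keep x hx', keep y hy, hyx]) (by rwa [keep _ hpx])
      (by have := card_unplayed_update hv o; omega)
  · exact makerWinsAt_of_hasWastedPair hG hK ⟨x, y, hxy, Or.inr hyx.symm, hy, hpx, hpy⟩ false

theorem makerWinsAt_true_of_monochromatic_pair (hG : IsIndepPairing G p)
    (hK : Fintype.card V ≤ #K + 2) {c : ℕ} (hxy : x ≠ y) (hx : f x = some (some c))
    (hyx : f y = f x) (h4 : 4 ≤ #(unplayed f)) : MakerWinsAt G K f true := by
  by_cases hpx : f (p x) = none
  · have hx' : f x ≠ none := by simp [hx]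
    have hy : f y ≠ none := by simp [hyx, hx]
    obtain ⟨d, hd⟩ := exists_bColLegal_of_partner_played hG hK hpx
      (by rwa [hG.involutive x]) (by omega)
    have keep := fun u (hu : f u ≠ none) => update_eq_of_ne_none hpx hu (some (some d))
    exact makerWinsAt_true_of_move hd
      (makerWinsAt_false_of_monochromatic_pair_of_partner_played hG hK hxy
        (by rw [keep x hx', hx]) (by rw [keep x hx', keep y hy, hyx]) (by simp)
        (by have := card_unplayed_update hpx (some d); omega))
  · exact makerWinsAt_true_of_monochromatic_pair_of_partner_played hG hK hxy hx hyx hpx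
      (by omega)

theorem makerWinsAt_true_of_reply_at_partner (hG : IsIndepPairing G p)
    (hK : Fintype.card V ≤ #K + 2) (h6 : 6 ≤ Fintype.card V) {a b : V} (hab : a ≠ b)
    (hapb : a ≠ p b) (hadj : ¬ G.Adj a b) {c₀ : ℕ} (hc₀ : c₀ ∈ K) {o : Option ℕ}
    (hb : f b = some (some c₀)) (hpb : f (p b) = some o)
    (hrest : ∀ u, u ≠ b → u ≠ p b → f u = none) (hcard : #(unplayed f) + 2 = Fintype.card V) :
    MakerWinsAt G K f true := by
  have hpbb := hG.ne_self b
  by_cases ho : o = none ∨ o = some c₀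
  · refine makerWinsAt_of_hasWastedPair hG hK ⟨p b, b, hpbb, ?_, by simp [hb],
      by rw [hG.involutive, hb]; simp, by simp [hpb]⟩ true
    rcases ho with rfl | rfl
    · exact Or.inl hpb
    · exact Or.inr (hpb.trans hb.symm)
  obtain ⟨c, rfl⟩ := Option.ne_none_iff_exists'.1 (not_or.1 ho).1
  have hc : c ≠ c₀ := fun h => ho (Or.inr (h ▸ rfl))
  have ha : f a = none := hrest a hab hapb
  have hlegal : BColLegal G K f a c₀ := by
    refine ⟨hc₀, ha, fun u hu hfu => ?_⟩
    by_cases hub : u = b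
    · exact hadj (hub ▸ hu)
    by_cases hupb : u = p b
    · simp [hupb, hpb, hc] at hfu
    · simp [hrest u hub hupb] at hfu
  refine makerWinsAt_true_of_move hlegal
    (makerWinsAt_false_of_monochromatic_pair_of_partner_played hG hK hab.symm
      (x := b) (y := a) (c := c₀) ?_ ?_ ?_ ?_)
  · rwa [update_of_ne hab.symm]
  · rw [update_self, update_of_ne hab.symm, hb]
  · rw [update_of_ne (Ne.symm hapb), hpb]; simp
  · have := card_unplayed_update ha (some c₀)
    omega

theorem makerWinsAt_true_of_reply_off_partner (hG : IsIndepPairing G p)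
    (hK : Fintype.card V ≤ #K + 2) (h6 : 6 ≤ Fintype.card V) {b : V} (hvb : v ≠ b)
    (hvpb : v ≠ p b) {c₀ : ℕ} {o : Option ℕ} (hb : f b = some (some c₀))
    (hv : f v = some o) (hrest : ∀ u, u ≠ b → u ≠ v → f u = none)
    (ho : ∀ c, o = some c → c ∈ K) (hcard : #(unplayed f) + 2 = Fintype.card V) :
    MakerWinsAt G K f true := by
  have hpvb : p v ≠ b := fun h => hvpb (by rw [← h, hG.involutive])
  have hpv : f (p v) = none := hrest _ hpvb (hG.ne_self v)
  by_cases ho₀ : o = some c₀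
  · subst ho₀
    exact makerWinsAt_true_of_monochromatic_pair hG hK hvb.symm hb (hv.trans hb.symm) (by omega)
  refine makerWinsAt_true_of_completable_part hG hK hv hpv ?_ (by omega)
  rintro c rfl
  refine ⟨ho c rfl, hpv, fun u hu hfu => ?_⟩
  by_cases hub : u = b
  · simp [hub, hb] at hfu
    exact ho₀ (by rw [hfu])
  by_cases huv : u = v
  · exact hG.not_adj v (huv ▸ hu.symm)
  · simp [hrest u hub huv] at hfu

theorem makerWinsB_of_not_adj (hG : IsIndepPairing G p) (hK : Fintype.card V ≤ #K + 2)
    (h6 : 6 ≤ Fintype.card V) {a b : V} (hab : a ≠ b) (hapb : a ≠ p b) (hadj : ¬ G.Adj a b) :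
    MakerWinsB G K (Fintype.card V) (fun _ => none) true := by
  obtain ⟨c₀, hc₀⟩ : K.Nonempty := card_pos.1 (by omega)
  have h0 : #(unplayed (fun _ : V => none)) = Fintype.card V := by simp [unplayed]
  rw [← h0]
  have hcard₁ := card_unplayed_update (f := fun _ => none) (v := b) rfl (some c₀)
  refine makerWinsAt_true_of_move (v := b) ⟨hc₀, rfl, by simp⟩ ?_
  generalize hf₁ : update (fun _ => none) b (some (some c₀)) = f₁ at hcard₁ ⊢
  have hb₁ : f₁ b = some (some c₀) := by simp [← hf₁]
  have hrest₁ : ∀ u, u ≠ b → f₁ u = none := fun u hu => by simp [← hf₁, hu]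
  have hlegal : BColLegal G K f₁ a c₀ := by
    refine ⟨hc₀, hrest₁ a hab, fun u hu hfu => ?_⟩
    by_cases hub : u = b
    · exact hadj (hub ▸ hu)
    · simp [hrest₁ u hub] at hfu
  refine makerWinsAt_false_of_moves ⟨a, c₀, hlegal⟩ fun v o hv ho => ?_
  have hvb : v ≠ b := by rintro rfl; simp [hb₁] at hv
  have hb : update f₁ v (some o) b = some (some c₀) := by rw [update_of_ne hvb.symm, hb₁]
  have hrest : ∀ u, u ≠ b → u ≠ v → update f₁ v (some o) u = none := fun u hub huv => by
    rw [update_of_ne huv, hrest₁ u hub]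
  have hcard : #(unplayed (update f₁ v (some o))) + 2 = Fintype.card V := by
    have := card_unplayed_update hv o
    omega
  by_cases hvpb : v = p b
  · subst hvpb
    exact makerWinsAt_true_of_reply_at_partner hG hK h6 hab hapb hadj hc₀ hb (update_self ..)
      hrest hcard
  · exact makerWinsAt_true_of_reply_off_partner hG hK h6 hvb hvpb hb (update_self ..) hrest
      (fun c h => (ho c h).1) hcard

end Pairing

section Turan

def turanPartner (r : ℕ) (v : Fin (2 * r)) : Fin (2 * r) :=
  ⟨if v < r then v + r else v - r, by split_ifs <;> omega⟩

theorem turanPartner_mod (r : ℕ) (v : Fin (2 * r)) : (turanPartner r v : ℕ) % r = v % r := by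
  simp only [turanPartner]
  split_ifs with h
  · exact Nat.add_mod_right _ _
  · exact (Nat.mod_eq_sub_mod (by omega)).symm

theorem isIndepPairing_turanPartner {r : ℕ} {G : SimpleGraph (Fin (2 * r))}
    (hle : G ≤ SimpleGraph.turanGraph (2 * r) r) : IsIndepPairing G (turanPartner r) where
  involutive v := by
    ext
    simp only [turanPartner]
    split_ifs <;> omega
  ne_self v h := by
    have := congrArg Fin.val h
    simp only [turanPartner] at this
    split_ifs at this <;> omega
  not_adj v h := SimpleGraph.turanGraph_adj.1 (hle h) (turanPartner_mod r v).symm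

end Turan

/-- For `r ≥ 3`, any proper spanning subgraph `G` of the Turán graph
`T(2r,r)` satisfies `χ_gb(G) ≤ 2r − 2`. -/
theorem chiGb_le_of_proper_subgraph_turan (r : ℕ) (hr : 3 ≤ r)
    (G : SimpleGraph (Fin (2 * r)))
    (hle : G ≤ SimpleGraph.turanGraph (2 * r) r)
    (hne : G ≠ SimpleGraph.turanGraph (2 * r) r) :
    chiGb G ≤ 2 * r - 2 := by
  obtain ⟨a, b, hT, hG⟩ : ∃ a b, (SimpleGraph.turanGraph (2 * r) r).Adj a b ∧ ¬ G.Adj a b := by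
    by_contra! h
    exact hne (le_antisymm hle fun a b => h a b)
  rw [SimpleGraph.turanGraph_adj] at hT
  refine Nat.sInf_le ?_
  have := makerWinsB_of_not_adj (K := range (2 * r - 2)) (isIndepPairing_turanPartner hle)
    (by simp; omega) (by simp; omega) (fun h => hT (by rw [h]))
    (fun h => hT (by rw [h, turanPartner_mod])) hG
  simpa using this

end GameCol
end

section
/- If a finite simple graph G has at most ⌈k/2⌉ vertices of degree at least k, then χ_gb(G) ≤ k. -/
open Function

/-!
Maker colours a vertex of degree at least `k` (a large vertex) whenever one is unplayed.
A vertex of degree less than `k` always has a free colour. While a large vertex is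
unplayed, every round has removed at least one large vertex from play, so with `H` the
set of large vertices at most `2|H| - 2 ≤ k - 1` vertices have been played whenever an
unplayed large vertex remains: it too has a free colour. Hence the game only ends when
every vertex is coloured or blank.
-/

namespace GameCol

variable {V : Type*} [Fintype V] {G : SimpleGraph V} [DecidableRel G.Adj] {k : ℕ}
  {K : Finset ℕ} {f : V → Option (Option ℕ)} {v : V}

def played (f : V → Option (Option ℕ)) : Finset V :=
  Finset.univ.filter fun v => f v ≠ none

variable (G k) in
def largeDegree : Finset V :=
  Finset.univ.filter fun v => k ≤ G.degree v

variable (G k) in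
def unplayedLarge (f : V → Option (Option ℕ)) : Finset V :=
  (largeDegree G k).filter fun v => f v = none

theorem allPlayed_of_card_le_card_played (h : Fintype.card V ≤ (played f).card) :
    AllPlayed f := by
  intro v
  simpa [played] using (Finset.eq_univ_of_card _ (le_antisymm (Finset.card_le_univ _) h)).ge
    (Finset.mem_univ v)

theorem exists_unplayed_preferring_large (h : ¬ AllPlayed f) :
    ∃ v, f v = none ∧ ((unplayedLarge G k f).Nonempty → v ∈ unplayedLarge G k f) := by
  rcases (unplayedLarge G k f).eq_empty_or_nonempty with hU | ⟨v, hv⟩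
  · obtain ⟨v, hv⟩ : ∃ v, f v = none := by simpa [AllPlayed] using h
    exact ⟨v, hv, fun hne => absurd hU hne.ne_empty⟩
  · exact ⟨v, (Finset.mem_filter.1 hv).2, fun _ => hv⟩

theorem exists_bColLegal_of_card_played_neighbors_lt (hv : f v = none)
    (h : ((G.neighborFinset v).filter fun u => f u ≠ none).card < K.card) :
    ∃ c, BColLegal G K f v c := by
  set colours := ((G.neighborFinset v).filter fun u => f u ≠ none).image fun u => (f u).join
  have hlt : colours.card < (K.map .some).card := by
    rw [Finset.card_map]
    exact Finset.card_image_le.trans_lt h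
  obtain ⟨_, hmem, hfree⟩ := Finset.exists_mem_notMem_of_card_lt_card hlt
  obtain ⟨c, hc, rfl⟩ := Finset.mem_map.1 hmem
  refine ⟨c, hc, hv, fun u hadj hu => hfree (Finset.mem_image.2 ⟨u, ?_, ?_⟩)⟩ <;>
    simp [hadj, hu]

theorem exists_bColLegal_of_degree_lt (hv : f v = none) (h : G.degree v < K.card) :
    ∃ c, BColLegal G K f v c :=
  exists_bColLegal_of_card_played_neighbors_lt hv <|
    (Finset.card_filter_le _ _).trans_lt (G.card_neighborFinset_eq_degree v ▸ h)

theorem exists_bColLegal_of_card_played_lt (hv : f v = none) (h : (played f).card < K.card) :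
    ∃ c, BColLegal G K f v c :=
  exists_bColLegal_of_card_played_neighbors_lt hv <|
    (Finset.card_le_card fun u hu => by simpa [played] using (Finset.mem_filter.1 hu).2).trans_lt h

variable (G k) in
/-- After `j` rounds in which Maker coloured a large vertex whenever one was unplayed,
`2 * j` vertices are played and at most `|largeDegree| - j` large ones are not; after
Maker's next move, `2 * j + 1` and `|largeDegree| - j - 1`. -/
def OnSchedule (f : V → Option (Option ℕ)) (makerToMove : Bool) : Prop :=
  (unplayedLarge G k f).Nonempty →
    (played f).card + 2 * (unplayedLarge G k f).card + cond makerToMove 0 1 ≤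
      2 * (largeDegree G k).card

theorem onSchedule_start : OnSchedule G k (fun _ => none) true := by
  intro _
  simp [played, unplayedLarge]

theorem OnSchedule.exists_bColLegal {b : Bool} (hH : 2 * (largeDegree G k).card ≤ k + 1)
    (hs : OnSchedule G k f b) (hv : f v = none) :
    ∃ c, BColLegal G (Finset.range k) f v c := by
  by_cases hlarge : v ∈ largeDegree G k
  · have hU : v ∈ unplayedLarge G k f := Finset.mem_filter.2 ⟨hlarge, hv⟩
    have hbound := hs ⟨v, hU⟩
    have hpos := Finset.card_pos.2 ⟨v, hU⟩
    refine exists_bColLegal_of_card_played_lt hv ?_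
    rw [Finset.card_range]
    cases b <;> simp only [cond] at hbound <;> omega
  · refine exists_bColLegal_of_degree_lt hv ?_
    simpa [largeDegree] using hlarge

variable [DecidableEq V]

theorem card_played_update (hv : f v = none) (x : Option ℕ) :
    (played (update f v (some x))).card = (played f).card + 1 := by
  have : played (update f v (some x)) = insert v (played f) := by
    ext u
    rcases eq_or_ne u v with rfl | hne <;> simp [played, *]
  rw [this, Finset.card_insert_of_notMem (by simp [played, hv])]

theorem unplayedLarge_update (x : Option ℕ) :
    unplayedLarge G k (update f v (some x)) = (unplayedLarge G k f).erase v := by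
  ext u
  rcases eq_or_ne u v with rfl | hne <;> simp [unplayedLarge, *]

theorem OnSchedule.update_maker (hs : OnSchedule G k f true) (hv : f v = none)
    (hpref : (unplayedLarge G k f).Nonempty → v ∈ unplayedLarge G k f) (x : Option ℕ) :
    OnSchedule G k (update f v (some x)) false := by
  intro hU'
  rw [unplayedLarge_update] at hU' ⊢
  have hU : (unplayedLarge G k f).Nonempty := hU'.mono (Finset.erase_subset _ _)
  have hbound := hs hU
  have hpos := Finset.card_pos.2 hU
  rw [card_played_update hv, Finset.card_erase_of_mem (hpref hU)]
  simp only [cond] at hbound ⊢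
  omega

theorem OnSchedule.update_breaker (hs : OnSchedule G k f false) (hv : f v = none)
    (x : Option ℕ) : OnSchedule G k (update f v (some x)) true := by
  intro hU'
  rw [unplayedLarge_update] at hU' ⊢
  have hbound := hs (hU'.mono (Finset.erase_subset _ _))
  have herase := Finset.card_erase_le (s := unplayedLarge G k f) (a := v)
  rw [card_played_update hv]
  simp only [cond] at hbound ⊢
  omega

theorem makerWinsB_of_onSchedule {fuel : ℕ} {b : Bool}
    (hH : 2 * (largeDegree G k).card ≤ k + 1)
    (hfuel : Fintype.card V ≤ fuel + (played f).card) (hs : OnSchedule G k f b) :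
    MakerWinsB G (Finset.range k) fuel f b := by
  induction fuel generalizing f b with
  | zero => exact allPlayed_of_card_le_card_played (by simpa using hfuel)
  | succ n ih =>
    have hfuel' : ∀ v x, f v = none →
        Fintype.card V ≤ n + (played (update f v (some x))).card := by
      intro v x hv
      rw [card_played_update hv]
      omega
    by_cases hall : AllPlayed f
    · cases b
      · exact .inl ⟨fun ⟨v, _, hc⟩ => hall v hc.2.1, hall⟩
      · exact .inl hall
    cases b with
    | true =>
      obtain ⟨v, hv, hpref⟩ := exists_unplayed_preferring_large (G := G) (k := k) hall
      obtain ⟨c, hc⟩ := hs.exists_bColLegal hH hv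
      exact .inr ⟨v, c, hc, ih (hfuel' v _ hv) (hs.update_maker hv hpref _)⟩
    | false =>
      obtain ⟨v, hv⟩ : ∃ v, f v = none := by simpa [AllPlayed] using hall
      refine .inr ⟨⟨v, hs.exists_bColLegal hH hv⟩, fun w c hc => ?_, fun w hw => ?_⟩
      · exact ih (hfuel' w _ hc.2.1) (hs.update_breaker hc.2.1 _)
      · exact ih (hfuel' w _ hw) (hs.update_breaker hw _)

/-- If a finite simple graph `G` has at most `⌈k/2⌉` vertices of
degree at least `k`, then `χ_gb(G) ≤ k`. -/
theorem chiGb_le_of_few_large_degree {V : Type*} [Fintype V] [DecidableEq V]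
    (G : SimpleGraph V) [DecidableRel G.Adj] (k : ℕ)
    (h : (Finset.univ.filter (fun v => k ≤ G.degree v)).card ≤ (k + 1) / 2) :
    chiGb G ≤ k := by
  have hH : 2 * (largeDegree G k).card ≤ k + 1 := by
    unfold largeDegree
    omega
  exact Nat.sInf_le (makerWinsB_of_onSchedule hH (by simp [played]) onSchedule_start)

end GameCol
end
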